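/- arXiv:2604.15473 — 6 statements merged into one kernel-verified Lean document; each statement's English description precedes it below -/
import Mathlib

section
/- Let K be a field of characteristic zero, and let v, ∂ : K → K be two derivations that commute (v ∘ ∂ = ∂ ∘ v). Let R₀ ∈ K with R₀ ≠ 0 and λ ∈ K satisfy v(R₀) = λ·R₀, let w ∈ ℚ, and let R ∈ K satisfy v(R) = w·λ·R (with w regarded as an element of K). Then the element S = ∂(R) − w·(∂(R₀)/R₀)·R satisfies v(S) = w·λ·S. That is, the covariant derivative ∇⁰_∂ = ∂ − w·∂(log R₀) maps relative invariants of weight w (relative to the reference relative invariant R₀) to relative invariants of the same weight w. -/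
/-!
Because `v` and `∂` commute, `v` maps the logarithmic derivative `∂R₀ / R₀` of the eigenvector
`R₀` to `∂λ`, while `v (∂R) = ∂ (w λ R) = w (∂λ · R + λ · ∂R)`. Applying `v` to the correction
`-w (∂R₀ / R₀) R` thus produces `-w ∂λ · R`, which cancels the defect `w ∂λ · R`. Every derivation
kills rational constants, so `w` is a common constant of `v` and `∂`.
-/

namespace Derivation

def ofAddLeibniz {A : Type*} [CommRing A] (f : A → A) (hadd : ∀ a b, f (a + b) = f a + f b)
    (hmul : ∀ a b, f (a * b) = f a * b + a * f b) : Derivation ℤ A A :=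
  mk' (AddMonoidHom.mk' f hadd).toIntLinearMap fun a b => by
    change f (a * b) = a * f b + b * f a
    rw [hmul]
    ring

variable {R K : Type*} [CommRing R] [Field K] [Algebra R K]

@[simp]
theorem map_ratCast (D : Derivation R K K) (q : ℚ) : D (q : K) = 0 := by
  rw [Rat.cast_def, D.leibniz_div_const _ _ (D.map_natCast _), D.map_intCast, smul_zero]

variable {V D : Derivation R K K}

theorem apply_apply_div_self_of_apply_eq_mul (hcomm : ∀ a, V (D a) = D (V a)) {R₀ lam : K}
    (hR₀ : R₀ ≠ 0) (h₀ : V R₀ = lam * R₀) : V (D R₀ / R₀) = D lam := by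
  simp only [leibniz_div, hcomm, h₀, leibniz, smul_eq_mul]
  field_simp
  ring

theorem apply_covariantDeriv_of_apply_eq_mul (hcomm : ∀ a, V (D a) = D (V a)) {R₀ lam : K}
    (hR₀ : R₀ ≠ 0) (h₀ : V R₀ = lam * R₀) {c : K} (hVc : V c = 0) (hDc : D c = 0) {R : K}
    (hR : V R = c * lam * R) :
    V (D R - c * (D R₀ / R₀) * R) = c * lam * (D R - c * (D R₀ / R₀) * R) := by
  have hVDR : V (D R) = c * (D lam * R + lam * D R) := by
    simp only [hcomm, hR, leibniz, hDc, smul_eq_mul]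
    ring
  simp only [Derivation.map_sub, leibniz, smul_eq_mul, hVDR, hVc,
    apply_apply_div_self_of_apply_eq_mul hcomm hR₀ h₀, hR]
  ring

end Derivation

theorem covariant_derivative_preserves_relative_invariants_general
    {K : Type*} [Field K]
    (v d : K → K)
    (hv_add : ∀ a b : K, v (a + b) = v a + v b)
    (hv_mul : ∀ a b : K, v (a * b) = v a * b + a * v b)
    (hd_add : ∀ a b : K, d (a + b) = d a + d b)
    (hd_mul : ∀ a b : K, d (a * b) = d a * b + a * d b)
    (hcomm : ∀ a : K, v (d a) = d (v a))
    (R₀ : K) (hR₀ : R₀ ≠ 0) (lam : K) (h₀ : v R₀ = lam * R₀)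
    (w : ℚ) (R : K) (hR : v R = (w : K) * lam * R) :
    v (d R - (w : K) * (d R₀ / R₀) * R)
      = (w : K) * lam * (d R - (w : K) * (d R₀ / R₀) * R) := by
  let V := Derivation.ofAddLeibniz v hv_add hv_mul
  let D := Derivation.ofAddLeibniz d hd_add hd_mul
  exact Derivation.apply_covariantDeriv_of_apply_eq_mul (V := V) (D := D) hcomm hR₀ h₀
    (V.map_ratCast w) (D.map_ratCast w) hR

/-- Let `K` be a field of characteristic zero and `v, ∂ : K → K` two
commuting derivations.  Let `R₀ ≠ 0` with `v(R₀) = λ·R₀`, let `w ∈ ℚ`, and let `R` satisfy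
`v(R) = w·λ·R`.  Then `S = ∂(R) − w·(∂(R₀)/R₀)·R` satisfies `v(S) = w·λ·S`:
the covariant derivative `∇⁰_∂ = ∂ − w·∂(log R₀)` preserves relative invariants of weight `w`. -/
theorem covariant_derivative_preserves_relative_invariants
    {K : Type*} [Field K] [CharZero K]
    (v d : K → K)
    (hv_add : ∀ a b : K, v (a + b) = v a + v b)
    (hv_mul : ∀ a b : K, v (a * b) = v a * b + a * v b)
    (hd_add : ∀ a b : K, d (a + b) = d a + d b)
    (hd_mul : ∀ a b : K, d (a * b) = d a * b + a * d b)
    (hcomm : ∀ a : K, v (d a) = d (v a))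
    (R₀ : K) (hR₀ : R₀ ≠ 0) (lam : K) (h₀ : v R₀ = lam * R₀)
    (w : ℚ) (R : K) (hR : v R = (w : K) * lam * R) :
    v (d R - (w : K) * (d R₀ / R₀) * R)
      = (w : K) * lam * (d R - (w : K) * (d R₀ / R₀) * R) :=
  covariant_derivative_preserves_relative_invariants_general v d hv_add hv_mul hd_add hd_mul hcomm
    R₀ hR₀ lam h₀ w R hR
end

section
/- Let K be a field of characteristic zero, let v, ∂ : K → K be two commuting derivations (v ∘ ∂ = ∂ ∘ v), let s be a natural number, and let R₁, …, R_s ∈ K be nonzero elements with v(R_i) = λ_i·R_i for some λ_i ∈ K (i = 1, …, s). Let w₁, …, w_s ∈ ℚ and let R ∈ K satisfy v(R) = (Σᵢ wᵢ·λᵢ)·R (with the rational numbers wᵢ regarded as elements of K). Then the element S = ∂(R) − (Σᵢ wᵢ·∂(R_i)/R_i)·R satisfies v(S) = (Σᵢ wᵢ·λᵢ)·S. That is, the operator ∇^w_∂ = ∂ − ∂(log(R₁^{w₁}⋯R_s^{w_s})) preserves the space of relative invariants of weight w = (w₁, …, w_s). -/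
/-!
Since `v` and `∂` commute, applying `∂` to `v(Rᵢ) = λᵢ Rᵢ` shows that `v` sends the logarithmic
derivative `∂Rᵢ / Rᵢ` to `∂λᵢ`. Hence `M = Σ wᵢ ∂Rᵢ / Rᵢ` and `L = Σ wᵢ λᵢ` satisfy `v(M) = ∂L`,
and `v(∂P − M P) = ∂(L P) − ∂L · P − M · L P = L (∂P − M P)`.
-/

open Finset

/-- Additivity already forces `ℚ`-linearity, so the rational weights are constants. -/
def Derivation.ofAddMul {K : Type*} [Field K] [CharZero K] (v : K → K)
    (hadd : ∀ a b : K, v (a + b) = v a + v b) (hmul : ∀ a b : K, v (a * b) = v a * b + a * v b) :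
    Derivation ℚ K K :=
  Derivation.mk' (AddMonoidHom.mk' v hadd).toRatLinearMap fun a b => by
    simp [hmul, add_comm, mul_comm]

namespace Derivation

variable {R : Type*} [CommRing R]

theorem map_sub_mul_of_map_eq_mul {A : Type*} [CommRing A] [Algebra R A]
    {v d : Derivation R A A} (hcomm : ∀ a, v (d a) = d (v a))
    {L M P : A} (hP : v P = L * P) (hM : v M = d L) :
    v (d P - M * P) = L * (d P - M * P) := by
  simp only [map_sub, leibniz, hcomm, hP, hM, smul_eq_mul]
  ring

theorem map_div_self_of_map_eq_mul {K : Type*} [Field K] [Algebra R K] {v d : Derivation R K K}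
    (hcomm : ∀ a, v (d a) = d (v a)) {r l : K} (hr : r ≠ 0) (hrl : v r = l * r) :
    v (d r / r) = d l := by
  rw [leibniz_div, hcomm, hrl, leibniz]
  simp only [smul_eq_mul]
  field_simp
  ring

theorem map_sum_ratCast_mul_div_self {K : Type*} [Field K] [CharZero K] {v d : Derivation ℚ K K}
    (hcomm : ∀ a, v (d a) = d (v a)) {ι : Type*} (s : Finset ι) {r l : ι → K}
    (hr : ∀ i, r i ≠ 0) (hrl : ∀ i, v (r i) = l i * r i) (w : ι → ℚ) :
    v (∑ i ∈ s, (w i : K) * (d (r i) / r i)) = d (∑ i ∈ s, (w i : K) * l i) := by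
  simp only [map_sum, ← Rat.smul_def, map_smul, map_div_self_of_map_eq_mul hcomm (hr _) (hrl _)]

end Derivation

/-- Let `K` be a field of characteristic zero, `v, ∂ : K → K` two commuting
derivations, and `R₁, …, R_s ∈ K` nonzero with `v(R_i) = λ_i·R_i`.  Let `w₁, …, w_s ∈ ℚ` and
let `R` satisfy `v(R) = (Σᵢ wᵢ·λᵢ)·R`.  Then `S = ∂(R) − (Σᵢ wᵢ·∂(R_i)/R_i)·R` satisfies
`v(S) = (Σᵢ wᵢ·λᵢ)·S`: the operator `∇^w_∂ = ∂ − ∂(log(R₁^{w₁}⋯R_s^{w_s}))` preserves the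
space of relative invariants of weight `w = (w₁, …, w_s)`. -/
theorem multiweight_covariant_derivative_preserves_relative_invariants
    {K : Type*} [Field K] [CharZero K]
    (v d : K → K)
    (hv_add : ∀ a b : K, v (a + b) = v a + v b)
    (hv_mul : ∀ a b : K, v (a * b) = v a * b + a * v b)
    (hd_add : ∀ a b : K, d (a + b) = d a + d b)
    (hd_mul : ∀ a b : K, d (a * b) = d a * b + a * d b)
    (hcomm : ∀ a : K, v (d a) = d (v a))
    (s : ℕ) (R : Fin s → K) (hRne : ∀ i, R i ≠ 0) (lam : Fin s → K)
    (hRi : ∀ i, v (R i) = lam i * R i)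
    (w : Fin s → ℚ) (P : K)
    (hP : v P = (∑ i, (w i : K) * lam i) * P) :
    v (d P - (∑ i, (w i : K) * (d (R i) / R i)) * P)
      = (∑ i, (w i : K) * lam i) * (d P - (∑ i, (w i : K) * (d (R i) / R i)) * P) := by
  let V := Derivation.ofAddMul v hv_add hv_mul
  let D := Derivation.ofAddMul d hd_add hd_mul
  have hVD : ∀ a, V (D a) = D (V a) := hcomm
  exact V.map_sub_mul_of_map_eq_mul hVD hP (V.map_sum_ratCast_mul_div_self hVD univ hRne hRi w)
end

section
/- Let A = ℂ[y₂, y₃, y₄, …] be the polynomial ring over ℂ in countably many variables y_j (j ≥ 2), let D : A → A be the unique ℂ-derivation with D(y_j) = y_{j+1} for all j ≥ 2 (the truncated total derivative), and for w ∈ ℚ let Δ_w : A → A be the ℂ-linear map Δ_w(P) = y₂·D(P) − (w/3)·y₃·P. Set R₄ = 3·y₂·y₄ − 5·y₃². Then for every w ∈ ℚ and every P ∈ A, the variable y₂ divides the element Δ_{w+4}(Δ_w(P)) + (w·(w+4)/45)·R₄·P in A. -/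
open MvPolynomial

/-- The polynomial ring `A = ℂ[y₂, y₃, y₄, …]` in countably many variables `y_j`, `j ≥ 2`. -/
abbrev JetAlg : Type := MvPolynomial {n : ℕ // 2 ≤ n} ℂ

/-- The variable `y_n` (for `n ≥ 2`). -/
noncomputable def Y (n : ℕ) : JetAlg :=
  if h : 2 ≤ n then X ⟨n, h⟩ else 0

/-- The relative invariant `R₄ = 3·y₂·y₄ − 5·y₃²`. -/
noncomputable def R₄ : JetAlg := 3 * Y 2 * Y 4 - 5 * Y 3 ^ 2

/-- The relative invariant derivation `Δ_w(P) = y₂·D(P) − (w/3)·y₃·P`. -/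
noncomputable def Δ (D : Derivation ℂ JetAlg JetAlg) (w : ℚ) (P : JetAlg) : JetAlg :=
  Y 2 * D P - C ((w / 3 : ℚ) : ℂ) * Y 3 * P

/-! Modulo `y₂` the derivative term of `Δ_w` vanishes, so `Δ_w` acts as multiplication by
`-(w/3)·y₃` and `Δ_{w+4} Δ_w P ≡ (w(w+4)/9)·y₃²·P`, while `R₄ ≡ -5·y₃²`; the two cancel because
`w(w+4)/9 = 5 · w(w+4)/45`. -/

theorem map_Δ_of_map_Y₂_eq_zero {S : Type*} [CommRing S] (φ : JetAlg →+* S)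
    (hφ : φ (Y 2) = 0) (D : Derivation ℂ JetAlg JetAlg) (w : ℚ) (P : JetAlg) :
    φ (Δ D w P) = -(φ (C ((w / 3 : ℚ) : ℂ)) * φ (Y 3) * φ P) := by
  simp [Δ, hφ]

theorem map_R₄_of_map_Y₂_eq_zero {S : Type*} [CommRing S] (φ : JetAlg →+* S)
    (hφ : φ (Y 2) = 0) : φ R₄ = -5 * φ (Y 3) ^ 2 := by
  simp [R₄, hφ, map_ofNat]

theorem y2_divides_iterated_Delta_general
    (D : Derivation ℂ JetAlg JetAlg)
    (w : ℚ) (P : JetAlg) :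
    Y 2 ∣ (Δ D (w + 4) (Δ D w P) + C ((w * (w + 4) / 45 : ℚ) : ℂ) * R₄ * P) := by
  rw [← Ideal.Quotient.eq_zero_iff_dvd]
  set φ := Ideal.Quotient.mk (Ideal.span {Y 2})
  have hY₂ : φ (Y 2) = 0 := (Ideal.Quotient.eq_zero_iff_dvd _ _).2 dvd_rfl
  have hweights :
      (((w + 4) / 3 : ℚ) : ℂ) * ((w / 3 : ℚ) : ℂ) = 5 * ((w * (w + 4) / 45 : ℚ) : ℂ) := by
    push_cast; ring
  have hconst := congrArg (φ.comp C) hweights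
  simp only [RingHom.comp_apply, map_mul, map_ofNat] at hconst
  rw [map_add, map_mul, map_mul, map_Δ_of_map_Y₂_eq_zero φ hY₂,
    map_Δ_of_map_Y₂_eq_zero φ hY₂, map_R₄_of_map_Y₂_eq_zero φ hY₂]
  linear_combination (φ (Y 3) ^ 2 * φ P) * hconst

/-- Let `D` be the unique ℂ-derivation of `A = ℂ[y₂, y₃, …]` with
`D(y_j) = y_{j+1}` for all `j ≥ 2`.  Then for every `w ∈ ℚ` and every `P ∈ A`, the variable
`y₂` divides `Δ_{w+4}(Δ_w(P)) + (w·(w+4)/45)·R₄·P` in `A`. -/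
theorem y2_divides_iterated_Delta
    (D : Derivation ℂ JetAlg JetAlg)
    (hD : ∀ n : ℕ, 2 ≤ n → D (Y n) = Y (n + 1))
    (w : ℚ) (P : JetAlg) :
    Y 2 ∣ (Δ D (w + 4) (Δ D w P) + C ((w * (w + 4) / 45 : ℚ) : ℂ) * R₄ * P) :=
  y2_divides_iterated_Delta_general D w P
end

section
/- Let A = ℂ[y₂, y₃, y₄, …] be the polynomial ring over ℂ in countably many variables y_j (j ≥ 2), let D : A → A be the unique ℂ-derivation with D(y_j) = y_{j+1} for all j ≥ 2 (the truncated total derivative), and for w ∈ ℚ let Δ_w : A → A be the ℂ-linear map Δ_w(P) = y₂·D(P) − (w/3)·y₃·P. Set R₄ = 3·y₂·y₄ − 5·y₃². Then there exists a (necessarily unique) sequence Q indexed by integers i ≥ 2 with values in A such that: Q(2) = R₄; for every i ≥ 3, y₂·Q(i) = Δ_{5i−3}(Δ_{5i−7}(Q(i−1))) + ((5i−7)·(5i−3)/45)·R₄·Q(i−1); and for every i ≥ 2, Q(i) = 3·y₂^{i−1}·y_{2i} + γ_i, where γ_i belongs to the ℂ-subalgebra of A generated by the variables y₂, …, y_{2i−1}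 (i.e., γ_i does not involve y_{2i} or higher variables). -/
open MvPolynomial

/-!
`Δ_{w₂} ∘ Δ_{w₁} + (w₁ w₂ / 45) R₄` is `y₂` times a second order operator `L`, and `Q` iterates `L`.
Since `D` maps `ℂ[y₂, …, y_m]` into `ℂ[y₂, …, y_{m+1}]` and `D y_m = y_{m+1}`, the operator `L`
sends `c y_{m+1} + (terms in ℂ[y₂, …, y_m])`, with `c ∈ ℂ[y₂]`, to
`y₂ c y_{m+3} + (terms in ℂ[y₂, …, y_{m+2}])`; starting from `R₄ = 3 y₂ y₄ - 5 y₃²` this gives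
the leading term `3 y₂^{i-1} y_{2i}` of `Q i`.
-/

/-- In `Δ_{w₂} (Δ_{w₁} P)` the only term not divisible by `y₂` is `(w₁ w₂ / 9) y₃² P`, which
`(w₁ w₂ / 45) R₄ P` cancels; `nextQ D w₁ w₂ P` is the quotient by `y₂`. -/
noncomputable def nextQ (D : Derivation ℂ JetAlg JetAlg) (w₁ w₂ : ℚ) (P : JetAlg) : JetAlg :=
  Y 2 * D (D P) + (1 - C ((w₁ / 3 : ℚ) : ℂ) - C ((w₂ / 3 : ℚ) : ℂ)) * Y 3 * D P
    + (3 * C ((w₁ * w₂ / 45 : ℚ) : ℂ) - C ((w₁ / 3 : ℚ) : ℂ)) * Y 4 * P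

theorem Δ_Δ_add_R₄_mul (D : Derivation ℂ JetAlg JetAlg) (h₂ : D (Y 2) = Y 3)
    (h₃ : D (Y 3) = Y 4) (w₁ w₂ : ℚ) (P : JetAlg) :
    Δ D w₂ (Δ D w₁ P) + C ((w₁ * w₂ / 45 : ℚ) : ℂ) * R₄ * P = Y 2 * nextQ D w₁ w₂ P := by
  have hc : 5 * C ((w₁ * w₂ / 45 : ℚ) : ℂ) =
      C ((w₁ / 3 : ℚ) : ℂ) * (C ((w₂ / 3 : ℚ) : ℂ) : JetAlg) := by
    rw [← map_mul, ← map_ofNat C, ← map_mul]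
    push_cast
    ring_nf
  simp only [Δ, R₄, nextQ, map_sub, Derivation.leibniz, derivation_C, h₂, h₃, smul_eq_mul]
  linear_combination -(Y 3 ^ 2 * P) * hc

noncomputable def Qseq (D : Derivation ℂ JetAlg JetAlg) : ℕ → JetAlg
  | 0 | 1 => 0
  | 2 => R₄
  | n + 3 => nextQ D (5 * ((n + 3 : ℕ) : ℚ) - 7) (5 * ((n + 3 : ℕ) : ℚ) - 3) (Qseq D (n + 2))

noncomputable abbrev jetsUpTo (m : ℕ) : Subalgebra ℂ JetAlg := Algebra.adjoin ℂ (Y '' Set.Icc 2 m)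

theorem Y_mem_jetsUpTo {n m : ℕ} (hn : 2 ≤ n) (hm : n ≤ m) : Y n ∈ jetsUpTo m :=
  Algebra.subset_adjoin ⟨n, ⟨hn, hm⟩, rfl⟩

theorem C_mem_jetsUpTo (a : ℂ) (m : ℕ) : C a ∈ jetsUpTo m :=
  (jetsUpTo m).algebraMap_mem a

theorem jetsUpTo_mono : Monotone jetsUpTo := fun _ _ h =>
  Algebra.adjoin_mono (Set.image_mono (Set.Icc_subset_Icc_right h))

theorem mem_jetsUpTo_succ_of_sub_mul_Y_mem {m : ℕ} (hm : 1 ≤ m) {c P : JetAlg}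
    (hc : c ∈ jetsUpTo (m + 1)) (hP : P - c * Y (m + 1) ∈ jetsUpTo m) :
    P ∈ jetsUpTo (m + 1) := by
  rw [← sub_add_cancel P (c * Y (m + 1))]
  exact add_mem (jetsUpTo_mono m.le_succ hP) (mul_mem hc (Y_mem_jetsUpTo (by omega) le_rfl))

section Derivation

variable {D : Derivation ℂ JetAlg JetAlg}

theorem Derivation.map_mem_jetsUpTo_succ (hD : ∀ n : ℕ, 2 ≤ n → D (Y n) = Y (n + 1))
    {m : ℕ} {p : JetAlg} (hp : p ∈ jetsUpTo m) : D p ∈ jetsUpTo (m + 1) := by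
  induction hp using Algebra.adjoin_induction with
  | mem x hx =>
    obtain ⟨n, ⟨hn, hnm⟩, rfl⟩ := hx
    rw [hD n hn]
    exact Y_mem_jetsUpTo (by omega) (by omega)
  | algebraMap r =>
    rw [D.map_algebraMap]
    exact zero_mem _
  | add x y _ _ hx hy =>
    rw [map_add]
    exact add_mem hx hy
  | mul x y hx' hy' hx hy =>
    rw [Derivation.leibniz, smul_eq_mul, smul_eq_mul]
    exact add_mem (mul_mem (jetsUpTo_mono m.le_succ hx') hy)
      (mul_mem (jetsUpTo_mono m.le_succ hy') hx)

theorem Derivation.map_sub_mul_Y_mem (hD : ∀ n : ℕ, 2 ≤ n → D (Y n) = Y (n + 1))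
    {m : ℕ} (hm : 2 ≤ m) {c P : JetAlg} (hc : c ∈ jetsUpTo 2)
    (hP : P - c * Y (m + 1) ∈ jetsUpTo m) : D P - c * Y (m + 2) ∈ jetsUpTo (m + 1) := by
  have hsplit : D P - c * Y (m + 2) = D (P - c * Y (m + 1)) + D c * Y (m + 1) := by
    rw [map_sub, Derivation.leibniz, hD (m + 1) (by omega), smul_eq_mul, smul_eq_mul]
    ring
  rw [hsplit]
  exact add_mem (D.map_mem_jetsUpTo_succ hD hP)
    (mul_mem (jetsUpTo_mono (by omega) (D.map_mem_jetsUpTo_succ hD hc))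
      (Y_mem_jetsUpTo (by omega) (by omega)))

theorem nextQ_sub_mul_Y_mem (hD : ∀ n : ℕ, 2 ≤ n → D (Y n) = Y (n + 1)) (w₁ w₂ : ℚ)
    {m : ℕ} (hm : 2 ≤ m) {c P : JetAlg} (hc : c ∈ jetsUpTo 2)
    (hP : P - c * Y (m + 1) ∈ jetsUpTo m) :
    nextQ D w₁ w₂ P - Y 2 * c * Y (m + 3) ∈ jetsUpTo (m + 2) := by
  have hDP : D P - c * Y (m + 2) ∈ jetsUpTo (m + 1) := D.map_sub_mul_Y_mem hD hm hc hP
  have hDDP : D (D P) - c * Y (m + 3) ∈ jetsUpTo (m + 2) :=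
    D.map_sub_mul_Y_mem hD (m := m + 1) (by omega) hc hDP
  have hPmem : P ∈ jetsUpTo (m + 2) :=
    jetsUpTo_mono (by omega) (mem_jetsUpTo_succ_of_sub_mul_Y_mem (by omega)
      (jetsUpTo_mono (by omega) hc) hP)
  have hDPmem : D P ∈ jetsUpTo (m + 2) :=
    mem_jetsUpTo_succ_of_sub_mul_Y_mem (by omega) (jetsUpTo_mono (by omega) hc) hDP
  have hsplit : nextQ D w₁ w₂ P - Y 2 * c * Y (m + 3) = Y 2 * (D (D P) - c * Y (m + 3))
      + (1 - C ((w₁ / 3 : ℚ) : ℂ) - C ((w₂ / 3 : ℚ) : ℂ)) * Y 3 * D P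
      + (3 * C ((w₁ * w₂ / 45 : ℚ) : ℂ) - C ((w₁ / 3 : ℚ) : ℂ)) * Y 4 * P := by
    rw [nextQ]
    ring
  rw [hsplit]
  refine add_mem (add_mem (mul_mem (Y_mem_jetsUpTo le_rfl (by omega)) hDDP)
    (mul_mem (mul_mem ?_ (Y_mem_jetsUpTo (by omega) (by omega))) hDPmem))
    (mul_mem (mul_mem ?_ (Y_mem_jetsUpTo (by omega) (by omega))) hPmem)
  · exact sub_mem (sub_mem (one_mem _) (C_mem_jetsUpTo _ _)) (C_mem_jetsUpTo _ _)
  · exact sub_mem (mul_mem (ofNat_mem _ 3) (C_mem_jetsUpTo _ _)) (C_mem_jetsUpTo _ _)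

theorem Qseq_sub_mul_Y_mem (hD : ∀ n : ℕ, 2 ≤ n → D (Y n) = Y (n + 1)) (n : ℕ) :
    Qseq D (n + 2) - 3 * Y 2 ^ (n + 1) * Y (2 * n + 4) ∈ jetsUpTo (2 * n + 3) := by
  induction n with
  | zero =>
    have hR₄ : R₄ - 3 * Y 2 ^ 1 * Y 4 = -(5 * Y 3 ^ 2) := by
      rw [R₄]
      ring
    rw [Qseq, hR₄]
    exact neg_mem (mul_mem (ofNat_mem _ 5) (pow_mem (Y_mem_jetsUpTo (by norm_num) le_rfl) 2))
  | succ n ih =>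
    have hc : 3 * Y 2 ^ (n + 1) ∈ jetsUpTo 2 :=
      mul_mem (ofNat_mem _ 3) (pow_mem (Y_mem_jetsUpTo le_rfl le_rfl) _)
    have := nextQ_sub_mul_Y_mem hD (5 * ((n + 3 : ℕ) : ℚ) - 7) (5 * ((n + 3 : ℕ) : ℚ) - 3)
      (by omega) hc ih
    rw [show 2 * (n + 1) + 4 = 2 * n + 3 + 3 by ring, show 2 * (n + 1) + 3 = 2 * n + 3 + 2 by ring]
    have hstep : Qseq D (n + 1 + 2) = nextQ D (5 * ((n + 3 : ℕ) : ℚ) - 7)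
        (5 * ((n + 3 : ℕ) : ℚ) - 3) (Qseq D (n + 2)) := rfl
    rw [hstep]
    convert this using 2
    ring

end Derivation

/-- Let `D` be the unique ℂ-derivation of `A = ℂ[y₂, y₃, …]` with
`D(y_j) = y_{j+1}` for all `j ≥ 2`.  Then there exists a sequence `Q` (indexed by `i ≥ 2`)
in `A` such that `Q(2) = R₄`; for every `i ≥ 3`,
`y₂·Q(i) = Δ_{5i−3}(Δ_{5i−7}(Q(i−1))) + ((5i−7)·(5i−3)/45)·R₄·Q(i−1)`; and for every
`i ≥ 2`, `Q(i) = 3·y₂^{i−1}·y_{2i} + γ_i` with `γ_i` in the ℂ-subalgebra generated by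
`y₂, …, y_{2i−1}`. -/
theorem exists_Q_sequence
    (D : Derivation ℂ JetAlg JetAlg)
    (hD : ∀ n : ℕ, 2 ≤ n → D (Y n) = Y (n + 1)) :
    ∃ Q : ℕ → JetAlg,
      Q 2 = R₄ ∧
      (∀ i : ℕ, 3 ≤ i →
        Y 2 * Q i =
          Δ D (5 * (i : ℚ) - 3) (Δ D (5 * (i : ℚ) - 7) (Q (i - 1)))
            + C (((5 * (i : ℚ) - 7) * (5 * (i : ℚ) - 3) / 45 : ℚ) : ℂ) * R₄ * Q (i - 1)) ∧
      (∀ i : ℕ, 2 ≤ i →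
        ∃ γ ∈ Algebra.adjoin ℂ (Y '' Set.Icc 2 (2 * i - 1)),
          Q i = 3 * Y 2 ^ (i - 1) * Y (2 * i) + γ) := by
  refine ⟨Qseq D, rfl, fun i hi => ?_, fun i hi => ?_⟩
  · obtain ⟨n, rfl⟩ : ∃ n, i = n + 3 := ⟨i - 3, by omega⟩
    exact (Δ_Δ_add_R₄_mul D (hD 2 le_rfl) (hD 3 (by norm_num)) _ _ _).symm
  · obtain ⟨n, rfl⟩ : ∃ n, i = n + 2 := ⟨i - 2, by omega⟩
    rw [show 2 * (n + 2) - 1 = 2 * n + 3 by omega, show n + 2 - 1 = n + 1 by omega,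
      show 2 * (n + 2) = 2 * n + 4 by ring]
    exact ⟨_, Qseq_sub_mul_Y_mem hD n, (add_sub_cancel _ _).symm⟩
end

section
/- Let B = ℂ[x, y, y₁, y₂, …, y_k] (k ≥ 2) and let v₁, …, v₅ be the ℂ-derivations of B defined on generators by: v₁(x) = 1 and v₁ vanishes on all other variables; v₂(y) = 1 and v₂ vanishes on all other variables; v₃(y) = x, v₃(y₁) = 1, and v₃ vanishes on all other variables; v₄(x) = y, v₄(y) = 0, v₄(y_j) = ψ_j, where ψ₁ = −y₁² and ψ_{j+1} = D(ψ_j) − y₁·y_{j+1} with D the total derivative determined by D(x) = 1, D(y) = y₁, D(y_j) = y_{j+1}; v₅(x) = x, v₅(y) = −y, v₅(y_j) = −(j+1)·y_j. (These are the k-th prolongations of the special affine Lie algebra ⟨∂x, ∂y, x∂y, y∂x, x∂x − y∂y⟩ of vector fields on ℂ².) Suppose P ∈ B is nonzero and for each i = 1, …, 5 there exists λ_i ∈ B with v_i(P) = λ_i·P. Then: (a) P lies in the subring ℂ[y₂, …, y_k] (P involves neither x, nor y, nor y₁); (b) P is weighted homogeneous for the weight assignment y_j ↦ j + 1; and (c)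 v₅(P) = −d·P where d is the weighted degree of P; in particular the weight d is a nonnegative integer, positive unless P is constant. -/
open MvPolynomial

/-- The polynomial ring `B = ℂ[x, y, y₁, …, y_k]`, with variable indices
`0 ↦ x`, `1 ↦ y`, `j+1 ↦ y_j` for `1 ≤ j ≤ k`. -/
abbrev B (k : ℕ) : Type := MvPolynomial (Fin (k + 2)) ℂ

/-- The variable `x`. -/
noncomputable def xv (k : ℕ) : B k := X ⟨0, by omega⟩

/-- The variable `y`. -/
noncomputable def yv (k : ℕ) : B k := X ⟨1, by omega⟩

/-- The jet variable `y_j` (for `1 ≤ j ≤ k`). -/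
noncomputable def yj (k j : ℕ) : B k :=
  if h : 1 ≤ j ∧ j ≤ k then X ⟨j + 1, by omega⟩ else 0

/-!
Over `B`, the derivations `v₁`, `v₂` are `∂/∂x` and `∂/∂y`, and on polynomials free of `y`
the derivation `v₃` is `∂/∂y₁`. A polynomial dividing its own partial derivative `∂ᵢ P` has
`∂ᵢ P = 0`, because `∂ᵢ` lowers the degree in the `i`-th variable while multiplication by a
nonzero factor in a domain cannot; this gives (a).

On polynomials free of `x`, `v₅` is minus the weighted Euler operator `E = ∑ wᵢ Xᵢ ∂ᵢ` for
the weights `x ↦ 0`, `y ↦ 1`, `y_j ↦ j + 1`, which multiplies each monomial by its weight.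
If `E P = λ P` and `N` is the top weight of `P`, then `(λ - N) P = E P - N P` has no monomial
of weight `≥ N`, so it vanishes by additivity of the weighted degree; hence `λ = N` and every
monomial of `P` has weight `N`.
-/

namespace MvPolynomial

open Finsupp

variable {R σ : Type*}

theorem derivation_eq_sum_mul_pderiv [CommSemiring R] [Fintype σ]
    (D : Derivation R (MvPolynomial σ R) (MvPolynomial σ R)) (p : MvPolynomial σ R) :
    D p = ∑ i, D (X i) * pderiv i p := by
  classical
  have hsum : ∀ q, (∑ i, D (X i) • pderiv i) q = ∑ i, D (X i) * pderiv i q := fun q => by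
    rw [← Derivation.coeFnAddMonoidHom_apply, map_sum, Finset.sum_apply]
    rfl
  have hD : D = ∑ i, D (X i) • pderiv i :=
    derivation_ext fun j => by simp [hsum, pderiv_X, Pi.single_apply]
  rw [← hsum, ← hD]

theorem derivation_eq_mul_pderiv_of_forall_ne [CommSemiring R] [Fintype σ]
    (D : Derivation R (MvPolynomial σ R) (MvPolynomial σ R)) (p : MvPolynomial σ R) (i : σ)
    (h : ∀ j ≠ i, D (X j) = 0 ∨ pderiv j p = 0) :
    D p = D (X i) * pderiv i p := by
  rw [derivation_eq_sum_mul_pderiv, Finset.sum_eq_single i (fun j _ hj => ?_) (by simp)]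
  rcases h j hj with h | h <;> simp [h]

theorem degreeOf_pderiv_lt [CommSemiring R] {p : MvPolynomial σ R} {i : σ}
    (h : pderiv i p ≠ 0) : degreeOf i (pderiv i p) < degreeOf i p := by
  have key : ∀ m ∈ (pderiv i p).support, m i < degreeOf i p := fun m hm => by
    have hm' : m + single i 1 ∈ p.support := by
      rw [mem_support_iff, coeff_pderiv] at hm
      exact mem_support_iff.2 (left_ne_zero_of_mul hm)
    simpa using monomial_le_degreeOf i hm'
  obtain ⟨m, hm⟩ := support_nonempty.2 h
  exact (degreeOf_lt_iff ((Nat.zero_le _).trans_lt (key m hm))).2 key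

theorem pderiv_eq_zero_of_dvd [CommRing R] [IsDomain R] {p : MvPolynomial σ R} {i : σ}
    (hp : p ≠ 0) (h : p ∣ pderiv i p) : pderiv i p = 0 := by
  by_contra h0
  obtain ⟨l, hl⟩ := h
  have hl0 : l ≠ 0 := by rintro rfl; exact h0 (by rw [hl, mul_zero])
  have := degreeOf_pderiv_lt h0
  rw [hl, degreeOf_mul_eq hp hl0] at this
  omega

theorem notMem_vars_of_pderiv_eq_zero [CommRing R] [IsDomain R] [CharZero R]
    {p : MvPolynomial σ R} {i : σ} (h : pderiv i p = 0) : i ∉ p.vars := by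
  intro hi
  obtain ⟨d, hd, hdi⟩ := (mem_vars_iff_mem_support i).1 hi
  rw [Finsupp.mem_support_iff] at hdi
  have hcoeff := coeff_pderiv (i := i) p (d - single i 1)
  rw [h, coeff_zero, sub_add_single_one_cancel hdi, tsub_apply, single_eq_same] at hcoeff
  have hcast : ((d i - 1 : ℕ) : R) + 1 = d i := by exact_mod_cast Nat.sub_add_cancel (by omega)
  rw [hcast] at hcoeff
  exact (mul_ne_zero (mem_support_iff.1 hd) (Nat.cast_ne_zero.2 hdi)) hcoeff.symm

section Weighted

variable [CommSemiring R] {w : σ → ℕ}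

theorem exists_mem_support_weight_eq_weightedTotalDegree {p : MvPolynomial σ R} (hp : p ≠ 0) :
    ∃ d ∈ p.support, weight w d = weightedTotalDegree w p :=
  (Finset.exists_mem_eq_sup _ (support_nonempty.2 hp) _).imp fun _ ⟨hd, h⟩ => ⟨hd, h.symm⟩

theorem weightedHomogeneousComponent_weightedTotalDegree_ne_zero {p : MvPolynomial σ R}
    (hp : p ≠ 0) : weightedHomogeneousComponent w (weightedTotalDegree w p) p ≠ 0 := by
  classical
  obtain ⟨d, hd, hwd⟩ := exists_mem_support_weight_eq_weightedTotalDegree (w := w) hp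
  refine ne_zero_iff.2 ⟨d, ?_⟩
  rwa [coeff_weightedHomogeneousComponent, if_pos hwd, ← mem_support_iff]

theorem weightedHomogeneousComponent_add_mul {p q : MvPolynomial σ R} {a b : ℕ}
    (hp : weightedTotalDegree w p ≤ a) (hq : weightedTotalDegree w q ≤ b) :
    weightedHomogeneousComponent w (a + b) (p * q) =
      weightedHomogeneousComponent w a p * weightedHomogeneousComponent w b q := by
  classical
  ext d
  rw [coeff_weightedHomogeneousComponent]
  split_ifs with hd
  · rw [coeff_mul, coeff_mul]
    refine Finset.sum_congr rfl fun ⟨u, v⟩ huv => ?_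
    rw [Finset.HasAntidiagonal.mem_antidiagonal] at huv
    simp only [coeff_weightedHomogeneousComponent]
    by_cases hu : coeff u p = 0
    · simp [hu]
    by_cases hv : coeff v q = 0
    · simp [hv]
    have hwu := (le_weightedTotalDegree w (mem_support_iff.2 hu)).trans hp
    have hwv := (le_weightedTotalDegree w (mem_support_iff.2 hv)).trans hq
    have hsum : weight w u + weight w v = a + b := by rw [← map_add, huv, hd]
    rw [if_pos (by omega), if_pos (by omega)]
  · exact ((weightedHomogeneousComponent_isWeightedHomogeneous a p).mul
      (weightedHomogeneousComponent_isWeightedHomogeneous b q)).coeff_eq_zero d hd |>.symm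

theorem coeff_sum_weight_X_mul_pderiv [Fintype σ] (p : MvPolynomial σ R) (d : σ →₀ ℕ) :
    coeff d (∑ i, w i • (X i * pderiv i p)) = weight w d • coeff d p := by
  classical
  induction p using induction_on' with
  | monomial s a =>
    simp_rw [X_mul_pderiv_monomial, smul_smul, ← Finset.sum_smul, coeff_smul, coeff_monomial]
    split_ifs with hs
    · rw [← hs, weight_apply, sum_fintype _ _ (by simp)]
      simp_rw [smul_eq_mul, mul_comm]
    · simp
  | add p q hp hq =>
    simp_rw [map_add, mul_add, smul_add, Finset.sum_add_distrib, coeff_add, hp, hq, smul_add]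

theorem vars_eq_empty_of_isWeightedHomogeneous_zero {p : MvPolynomial σ R}
    (hw : ∀ i ∈ p.vars, w i ≠ 0) (hp : IsWeightedHomogeneous w p 0) : p.vars = ∅ := by
  refine Finset.eq_empty_of_forall_notMem fun i hi => ?_
  obtain ⟨d, hd, hdi⟩ := (mem_vars_iff_mem_support i).1 hi
  have := le_weight w (hw i hi) d
  rw [hp (mem_support_iff.1 hd)] at this
  exact Finsupp.mem_support_iff.1 hdi (Nat.le_zero.1 this)

end Weighted

theorem weightedTotalDegree_mul_of_isDomain [CommRing R] [IsDomain R] {w : σ → ℕ}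
    {p q : MvPolynomial σ R} (hp : p ≠ 0) (hq : q ≠ 0) :
    weightedTotalDegree w (p * q) = weightedTotalDegree w p + weightedTotalDegree w q := by
  classical
  refine le_antisymm (Finset.sup_le fun d hd => ?_) ?_
  · obtain ⟨u, hu, v, hv, rfl⟩ := Finset.mem_add.1 (support_mul p q hd)
    rw [map_add]
    exact add_le_add (le_weightedTotalDegree w hu) (le_weightedTotalDegree w hv)
  · obtain ⟨d, hd⟩ := ne_zero_iff.1 (mul_ne_zero
      (weightedHomogeneousComponent_weightedTotalDegree_ne_zero (w := w) hp)
      (weightedHomogeneousComponent_weightedTotalDegree_ne_zero (w := w) hq))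
    rw [← weightedHomogeneousComponent_add_mul le_rfl le_rfl,
      coeff_weightedHomogeneousComponent] at hd
    split_ifs at hd with hwd
    · exact hwd ▸ le_weightedTotalDegree w (mem_support_iff.2 hd)
    · exact absurd rfl hd

theorem isWeightedHomogeneous_of_dvd_sum_weight_X_mul_pderiv [CommRing R] [IsDomain R]
    [CharZero R] [Fintype σ] {w : σ → ℕ} {p : MvPolynomial σ R} (hp : p ≠ 0)
    (h : p ∣ ∑ i, w i • (X i * pderiv i p)) :
    IsWeightedHomogeneous w p (weightedTotalDegree w p) := by
  set N := weightedTotalDegree w p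
  obtain ⟨l, hl⟩ := h
  have hcoeff : ∀ d, coeff d (p * (l - C (N : R))) = ((weight w d : R) - N) * coeff d p := by
    intro d
    rw [mul_sub, ← hl, coeff_sub, coeff_sum_weight_X_mul_pderiv, mul_comm p, coeff_C_mul,
      nsmul_eq_mul]
    ring
  have hlN : l = C (N : R) := by
    by_contra hne
    have hl0 : l - C (N : R) ≠ 0 := sub_ne_zero.2 hne
    obtain ⟨d, hd, hwd⟩ :=
      exists_mem_support_weight_eq_weightedTotalDegree (w := w) (mul_ne_zero hp hl0)
    rw [weightedTotalDegree_mul_of_isDomain hp hl0] at hwd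
    rw [mem_support_iff, hcoeff] at hd
    have hdp := le_weightedTotalDegree w (mem_support_iff.2 (right_ne_zero_of_mul hd))
    exact left_ne_zero_of_mul hd (by rw [show weight w d = N by omega, sub_self])
  intro d hd
  have := hcoeff d
  rw [hlN, sub_self, mul_zero, coeff_zero, eq_comm, mul_eq_zero, sub_eq_zero] at this
  exact_mod_cast this.resolve_right hd

end MvPolynomial

section SpecialAffine

variable {k : ℕ}

theorem X_eq_yj (j : ℕ) (hj : j + 2 < k + 2) : (X ⟨j + 2, hj⟩ : B k) = yj k (j + 1) := by
  rw [yj, dif_pos (by omega)]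

theorem derivation_eq_pderiv_x (v : Derivation ℂ (B k) (B k)) (hx : v (xv k) = 1)
    (hy : v (yv k) = 0) (hj : ∀ j, 1 ≤ j → j ≤ k → v (yj k j) = 0) (P : B k) :
    v P = pderiv ⟨0, by omega⟩ P := by
  rw [derivation_eq_mul_pderiv_of_forall_ne v P ⟨0, by omega⟩, ← xv, hx, one_mul]
  rintro ⟨_ | _ | j, hj'⟩ hne
  · exact absurd rfl hne
  · exact .inl hy
  · exact .inl (X_eq_yj j hj' ▸ hj (j + 1) (by omega) (by omega))

theorem derivation_eq_pderiv_y (v : Derivation ℂ (B k) (B k)) (hx : v (xv k) = 0)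
    (hy : v (yv k) = 1) (hj : ∀ j, 1 ≤ j → j ≤ k → v (yj k j) = 0) (P : B k) :
    v P = pderiv ⟨1, by omega⟩ P := by
  rw [derivation_eq_mul_pderiv_of_forall_ne v P ⟨1, by omega⟩, ← yv, hy, one_mul]
  rintro ⟨_ | _ | j, hj'⟩ hne
  · exact .inl hx
  · exact absurd rfl hne
  · exact .inl (X_eq_yj j hj' ▸ hj (j + 1) (by omega) (by omega))

theorem derivation_eq_pderiv_y₁ (hk : 1 ≤ k) (v : Derivation ℂ (B k) (B k))
    (hx : v (xv k) = 0) (h₁ : v (yj k 1) = 1) (hj : ∀ j, 2 ≤ j → j ≤ k → v (yj k j) = 0)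
    {P : B k} (hP : pderiv ⟨1, by omega⟩ P = 0) :
    v P = pderiv ⟨2, by omega⟩ P := by
  rw [derivation_eq_mul_pderiv_of_forall_ne v P ⟨2, by omega⟩, X_eq_yj 0, h₁, one_mul]
  rintro ⟨_ | _ | _ | j, hj'⟩ hne
  · exact .inl hx
  · exact .inr hP
  · exact absurd rfl hne
  · exact .inl (X_eq_yj (j + 1) hj' ▸ hj (j + 2) (by omega) (by omega))

theorem derivation_eq_neg_sum_weight_X_mul_pderiv (v : Derivation ℂ (B k) (B k))
    (hy : v (yv k) = -(yv k))
    (hj : ∀ j, 1 ≤ j → j ≤ k → v (yj k j) = -(C ((j : ℂ) + 1) * yj k j))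
    {P : B k} (hP : pderiv ⟨0, by omega⟩ P = 0) :
    v P = -∑ i : Fin (k + 2), (i : ℕ) • (X i * pderiv i P) := by
  rw [derivation_eq_sum_mul_pderiv, ← Finset.sum_neg_distrib]
  refine Finset.sum_congr rfl fun i _ => ?_
  rcases i with ⟨_ | _ | j, hj'⟩
  · rw [hP]; simp
  · rw [← yv, hy]; simp
  · rw [X_eq_yj, hj (j + 1) (by omega) (by omega)]
    simp only [nsmul_eq_mul, map_add, map_one, map_natCast]; push_cast; ring

theorem supported_le_adjoin_yj :
    supported ℂ {i : Fin (k + 2) | 3 ≤ (i : ℕ)} ≤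
      Algebra.adjoin ℂ ((fun j => yj k j) '' Set.Icc 2 k) := by
  rw [supported_eq_adjoin_X]
  refine Algebra.adjoin_mono ?_
  rintro _ ⟨⟨_ | _ | j, hj'⟩, hi, rfl⟩
  all_goals simp only [Set.mem_ofPred_eq] at hi
  · omega
  · omega
  · exact ⟨j + 1, ⟨by omega, by omega⟩, (X_eq_yj j hj').symm⟩

end SpecialAffine

theorem saff_polynomial_relative_invariant_structure_general
    (k : ℕ) (hk : 2 ≤ k)
    (v1 v2 v3 v5 : Derivation ℂ (B k) (B k))
    (hv1x : v1 (xv k) = 1) (hv1y : v1 (yv k) = 0)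
    (hv1j : ∀ j, 1 ≤ j → j ≤ k → v1 (yj k j) = 0)
    (hv2x : v2 (xv k) = 0) (hv2y : v2 (yv k) = 1)
    (hv2j : ∀ j, 1 ≤ j → j ≤ k → v2 (yj k j) = 0)
    (hv3x : v3 (xv k) = 0)
    (hv31 : v3 (yj k 1) = 1)
    (hv3j : ∀ j, 2 ≤ j → j ≤ k → v3 (yj k j) = 0)
    (hv5y : v5 (yv k) = -(yv k))
    (hv5j : ∀ j, 1 ≤ j → j ≤ k → v5 (yj k j) = -(C ((j : ℂ) + 1) * yj k j))
    (P : B k) (hP : P ≠ 0)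
    (h1 : ∃ l : B k, v1 P = l * P) (h2 : ∃ l : B k, v2 P = l * P)
    (h3 : ∃ l : B k, v3 P = l * P)
    (h5 : ∃ l : B k, v5 P = l * P) :
    P ∈ Algebra.adjoin ℂ ((fun j => yj k j) '' Set.Icc 2 k) ∧
    ∃ d : ℕ,
      IsWeightedHomogeneous (fun i : Fin (k + 2) => (i : ℕ)) P d ∧
      v5 P = -(C (d : ℂ) * P) ∧
      ((∀ c : ℂ, P ≠ C c) → 0 < d) := by
  obtain ⟨l1, hl1⟩ := h1
  obtain ⟨l2, hl2⟩ := h2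
  obtain ⟨l3, hl3⟩ := h3
  obtain ⟨l5, hl5⟩ := h5
  have hx : pderiv ⟨0, by omega⟩ P = 0 := pderiv_eq_zero_of_dvd hP <| by
    rw [← derivation_eq_pderiv_x v1 hv1x hv1y hv1j]; exact Dvd.intro_left _ hl1.symm
  have hy : pderiv ⟨1, by omega⟩ P = 0 := pderiv_eq_zero_of_dvd hP <| by
    rw [← derivation_eq_pderiv_y v2 hv2x hv2y hv2j]; exact Dvd.intro_left _ hl2.symm
  have hy₁ : pderiv ⟨2, by omega⟩ P = 0 := pderiv_eq_zero_of_dvd hP <| by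
    rw [← derivation_eq_pderiv_y₁ (by omega) v3 hv3x hv31 hv3j hy]
    exact Dvd.intro_left _ hl3.symm
  have hvars : (P.vars : Set (Fin (k + 2))) ⊆ {i | 3 ≤ (i : ℕ)} := by
    rintro ⟨_ | _ | _ | i, hi⟩ hmem
    exacts [(notMem_vars_of_pderiv_eq_zero hx hmem).elim,
      (notMem_vars_of_pderiv_eq_zero hy hmem).elim, (notMem_vars_of_pderiv_eq_zero hy₁ hmem).elim,
      by simp]
  have hv5 := derivation_eq_neg_sum_weight_X_mul_pderiv v5 hv5y hv5j hx
  have hhom := isWeightedHomogeneous_of_dvd_sum_weight_X_mul_pderiv hP <| by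
    rw [← dvd_neg, ← hv5]; exact Dvd.intro_left _ hl5.symm
  refine ⟨supported_le_adjoin_yj (mem_supported.2 hvars), _, hhom, ?_, fun hP' => ?_⟩
  · rw [hv5, hhom.sum_weight_X_mul_pderiv, nsmul_eq_mul, map_natCast]
  · refine Nat.pos_of_ne_zero fun h0 => hP' _ (vars_eq_empty_iff_eq_C.1 ?_)
    refine vars_eq_empty_of_isWeightedHomogeneous_zero (fun i hi => ?_) (h0 ▸ hhom)
    have := hvars hi
    simp only [Set.mem_ofPred_eq] at this
    omega

/-- Let `v₁, …, v₅` be the `k`-th prolongations of the special affine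
algebra `⟨∂x, ∂y, x∂y, y∂x, x∂x − y∂y⟩` acting on `B = ℂ[x, y, y₁, …, y_k]`, described on
generators as in the hypotheses (`D` is the total derivative and `ψ_j = v₄(y_j)` is defined
by `ψ₁ = −y₁²`, `ψ_{j+1} = D(ψ_j) − y₁·y_{j+1}`).  If `P ≠ 0` and each `v_i(P) = λ_i·P`
for some `λ_i ∈ B`, then: (a) `P ∈ ℂ[y₂, …, y_k]`; (b) `P` is weighted homogeneous for the
weight assignment `y_j ↦ j + 1`; (c) `v₅(P) = −d·P` where `d` is the weighted degree of `P`,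
and `d > 0` unless `P` is constant. -/
theorem saff_polynomial_relative_invariant_structure
    (k : ℕ) (hk : 2 ≤ k)
    (D v1 v2 v3 v4 v5 : Derivation ℂ (B k) (B k)) (ψ : ℕ → B k)
    (hDx : D (xv k) = 1) (hDy : D (yv k) = yj k 1)
    (hDj : ∀ j, 1 ≤ j → j < k → D (yj k j) = yj k (j + 1))
    (hψ1 : ψ 1 = -(yj k 1) ^ 2)
    (hψrec : ∀ j, 1 ≤ j → j + 1 ≤ k → ψ (j + 1) = D (ψ j) - yj k 1 * yj k (j + 1))
    (hv1x : v1 (xv k) = 1) (hv1y : v1 (yv k) = 0)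
    (hv1j : ∀ j, 1 ≤ j → j ≤ k → v1 (yj k j) = 0)
    (hv2x : v2 (xv k) = 0) (hv2y : v2 (yv k) = 1)
    (hv2j : ∀ j, 1 ≤ j → j ≤ k → v2 (yj k j) = 0)
    (hv3x : v3 (xv k) = 0) (hv3y : v3 (yv k) = xv k)
    (hv31 : v3 (yj k 1) = 1)
    (hv3j : ∀ j, 2 ≤ j → j ≤ k → v3 (yj k j) = 0)
    (hv4x : v4 (xv k) = yv k) (hv4y : v4 (yv k) = 0)
    (hv4j : ∀ j, 1 ≤ j → j ≤ k → v4 (yj k j) = ψ j)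
    (hv5x : v5 (xv k) = xv k) (hv5y : v5 (yv k) = -(yv k))
    (hv5j : ∀ j, 1 ≤ j → j ≤ k → v5 (yj k j) = -(C ((j : ℂ) + 1) * yj k j))
    (P : B k) (hP : P ≠ 0)
    (h1 : ∃ l : B k, v1 P = l * P) (h2 : ∃ l : B k, v2 P = l * P)
    (h3 : ∃ l : B k, v3 P = l * P) (h4 : ∃ l : B k, v4 P = l * P)
    (h5 : ∃ l : B k, v5 P = l * P) :
    P ∈ Algebra.adjoin ℂ ((fun j => yj k j) '' Set.Icc 2 k) ∧
    ∃ d : ℕ,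
      IsWeightedHomogeneous (fun i : Fin (k + 2) => (i : ℕ)) P d ∧
      v5 P = -(C (d : ℂ) * P) ∧
      ((∀ c : ℂ, P ≠ C c) → 0 < d) :=
  saff_polynomial_relative_invariant_structure_general k hk v1 v2 v3 v5 hv1x hv1y hv1j hv2x hv2y
    hv2j hv3x hv31 hv3j hv5y hv5j P hP h1 h2 h3 h5
end

section
/- Let B = ℂ[x, y, y₁, y₂, y₃, y₄] with the five derivations v₁, …, v₅ defined on generators by: v₁(x) = 1 and v₁ vanishes on all other variables; v₂(y) = 1 and v₂ vanishes on all other variables; v₃(y) = x, v₃(y₁) = 1, and v₃ vanishes on all other variables; v₄(x) = y, v₄(y) = 0, v₄(y₁) = −y₁², v₄(y₂) = −3y₁y₂, v₄(y₃) = −4y₁y₃ − 3y₂², v₄(y₄) = −5y₁y₄ − 10y₂y₃; v₅(x) = x, v₅(y) = −y, v₅(y_j) = −(j+1)·y_j for j = 1, 2, 3, 4. (These are the fourth prolongations of the special affine Lie algebra ⟨∂x, ∂y, x∂y, y∂x, x∂x − y∂y⟩ of vector fields on ℂ².) Then R₂ = y₂ and R₄ = 3y₂y₄ − 5y₃² are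 relative invariants: v₁(R₂) = v₂(R₂) = v₃(R₂) = 0, v₄(R₂) = −3·y₁·R₂, v₅(R₂) = −3·R₂, and v₁(R₄) = v₂(R₄) = v₃(R₄) = 0, v₄(R₄) = −8·y₁·R₄, v₅(R₄) = −8·R₄. Thus R₂ has weight 3 and R₄ has weight 8. -/
/-!
A derivation is determined by its values on the generators. `R₂ = y₂` is itself a generator,
and by the Leibniz rule `v(R₄)` depends only on `v(y₂)`, `v(y₃)`, `v(y₄)`; substituting the
prescribed values gives the claims (for `v₄` the terms in `y₂²y₃` cancel).
-/

open MvPolynomial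

/-- The polynomial ring `B = ℂ[x, y, y₁, y₂, y₃, y₄]`, with variable indices
`0 ↦ x`, `1 ↦ y`, `2 ↦ y₁`, `3 ↦ y₂`, `4 ↦ y₃`, `5 ↦ y₄`. -/
abbrev B4 : Type := MvPolynomial (Fin 6) ℂ

theorem Derivation.map_ofNat {R A M : Type*} [CommSemiring R] [CommSemiring A]
    [AddCommMonoid M] [Algebra R A] [Module A M] [Module R M] (D : Derivation R A M) (n : ℕ)
    [n.AtLeastTwo] : D (no_index (OfNat.ofNat n : A)) = 0 :=
  D.map_natCast n

theorem Derivation.apply_three_mul_mul_sub_five_mul_sq {R A : Type*} [CommSemiring R]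
    [CommRing A] [Algebra R A] (D : Derivation R A A) (a b c : A) :
    D (3 * a * b - 5 * c ^ 2) = 3 * (D a * b + a * D b) - 10 * c * D c := by
  simp only [map_sub, Derivation.leibniz, Derivation.leibniz_pow, Derivation.map_ofNat,
    smul_eq_mul]
  ring

/-- Let `v₁, …, v₅` be the fourth prolongations of the special affine
algebra `⟨∂x, ∂y, x∂y, y∂x, x∂x − y∂y⟩` on `B = ℂ[x, y, y₁, y₂, y₃, y₄]`, given on
generators as in the hypotheses.  Then `R₂ = y₂` and `R₄ = 3y₂y₄ − 5y₃²` are relative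
invariants: `v₁, v₂, v₃` annihilate them, `v₄(R₂) = −3y₁R₂`, `v₅(R₂) = −3R₂`,
`v₄(R₄) = −8y₁R₄`, `v₅(R₄) = −8R₄`; thus `R₂` has weight `3` and `R₄` has weight `8`. -/
theorem R2_R4_are_relative_invariants
    (v1 v2 v3 v4 v5 : Derivation ℂ B4 B4)
    (hv1 : v1 (X 0) = 1 ∧ v1 (X 1) = 0 ∧ v1 (X 2) = 0 ∧ v1 (X 3) = 0 ∧
      v1 (X 4) = 0 ∧ v1 (X 5) = 0)
    (hv2 : v2 (X 0) = 0 ∧ v2 (X 1) = 1 ∧ v2 (X 2) = 0 ∧ v2 (X 3) = 0 ∧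
      v2 (X 4) = 0 ∧ v2 (X 5) = 0)
    (hv3 : v3 (X 0) = 0 ∧ v3 (X 1) = X 0 ∧ v3 (X 2) = 1 ∧ v3 (X 3) = 0 ∧
      v3 (X 4) = 0 ∧ v3 (X 5) = 0)
    (hv4 : v4 (X 0) = X 1 ∧ v4 (X 1) = 0 ∧ v4 (X 2) = -(X 2 ^ 2) ∧
      v4 (X 3) = -(3 * X 2 * X 3) ∧
      v4 (X 4) = -(4 * X 2 * X 4) - 3 * X 3 ^ 2 ∧
      v4 (X 5) = -(5 * X 2 * X 5) - 10 * X 3 * X 4)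
    (hv5 : v5 (X 0) = X 0 ∧ v5 (X 1) = -(X 1) ∧ v5 (X 2) = -(2 * X 2) ∧
      v5 (X 3) = -(3 * X 3) ∧ v5 (X 4) = -(4 * X 4) ∧ v5 (X 5) = -(5 * X 5)) :
    (v1 (X 3) = 0 ∧ v2 (X 3) = 0 ∧ v3 (X 3) = 0 ∧
      v4 (X 3) = -(3 * X 2 * X 3) ∧ v5 (X 3) = -(3 * X 3)) ∧
    (v1 (3 * X 3 * X 5 - 5 * X 4 ^ 2) = 0 ∧
      v2 (3 * X 3 * X 5 - 5 * X 4 ^ 2) = 0 ∧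
      v3 (3 * X 3 * X 5 - 5 * X 4 ^ 2) = 0 ∧
      v4 (3 * X 3 * X 5 - 5 * X 4 ^ 2) = -(8 * X 2 * (3 * X 3 * X 5 - 5 * X 4 ^ 2)) ∧
      v5 (3 * X 3 * X 5 - 5 * X 4 ^ 2) = -(8 * (3 * X 3 * X 5 - 5 * X 4 ^ 2))) := by
  obtain ⟨-, -, -, h1y₂, h1y₃, h1y₄⟩ := hv1
  obtain ⟨-, -, -, h2y₂, h2y₃, h2y₄⟩ := hv2
  obtain ⟨-, -, -, h3y₂, h3y₃, h3y₄⟩ := hv3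
  obtain ⟨-, -, -, h4y₂, h4y₃, h4y₄⟩ := hv4
  obtain ⟨-, -, -, h5y₂, h5y₃, h5y₄⟩ := hv5
  refine ⟨⟨h1y₂, h2y₂, h3y₂, h4y₂, h5y₂⟩, ?_, ?_, ?_, ?_, ?_⟩ <;>
    rw [Derivation.apply_three_mul_mul_sub_five_mul_sq]
  · rw [h1y₂, h1y₃, h1y₄]; ring
  · rw [h2y₂, h2y₃, h2y₄]; ring
  · rw [h3y₂, h3y₃, h3y₄]; ring
  · rw [h4y₂, h4y₃, h4y₄]; ring
  · rw [h5y₂, h5y₃, h5y₄]; ring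
end
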